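/- arXiv:math/9910005 — 2 statements merged into one kernel-verified Lean document; each statement's English description precedes it below -/
import Mathlib

section
/- Let S be a finite subset of ℝ, Λ a finite index set, and P a probability measure on S^Λ with full support. Suppose that for every site i ∈ Λ and configurations ξ ≤ ξ', the single-site conditional distribution of P at i given ξ is stochastically dominated by that given ξ'. Then P has positive correlations: for any two bounded monotone functions f, g : S^Λ → ℝ, ∫ fg dP ≥ (∫ f dP)(∫ g dP). -/
/-!
Run the Gibbs sampler of `P` that updates the sites one at a time in a fixed order. Each
heat-bath update leaves `P` invariant; by the monotonicity of the conditionals it maps monotone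
functions to monotone functions; and Chebyshev's sum inequality for the single-site conditional
law gives `(K f) (K g) ≤ K (f g)` for monotone `f`, `g`. Hence, for the full sweep `T`,
`E[(Tᵗ f) (Tᵗ g)] ≤ E[f g]` while `E[Tᵗ f] = E[f]`. Since `P` has full support, a sweep satisfies
Doeblin's condition, so `Tᵗ f` and `Tᵗ g` converge uniformly to the constants `E[f]` and `E[g]`,
and in the limit `E[f] E[g] ≤ E[f g]`.
-/

open Finset Function Filter Topology

theorem sum_mul_sum_le_sum_mul_sum_of_monotone {ι : Type*} [Fintype ι] [LinearOrder ι]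
    {w a b : ι → ℝ} (hw : ∀ s, 0 ≤ w s) (ha : Monotone a) (hb : Monotone b) :
    (∑ s, w s * a s) * (∑ s, w s * b s) ≤ (∑ s, w s) * ∑ s, w s * (a s * b s) := by
  -- symmetrize: twice the gap is `∑ s t, w s w t (a s - a t)(b s - b t)`
  have hterm : ∀ s t, 0 ≤ w s * w t * ((a s - a t) * (b s - b t)) := fun s t =>
    mul_nonneg (mul_nonneg (hw s) (hw t)) <| by
      rcases le_total s t with h | h
      · exact mul_nonneg_of_nonpos_of_nonpos (sub_nonpos.2 (ha h)) (sub_nonpos.2 (hb h))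
      · exact mul_nonneg (sub_nonneg.2 (ha h)) (sub_nonneg.2 (hb h))
  have hsum := Finset.sum_nonneg fun s (_ : s ∈ univ) =>
    Finset.sum_nonneg fun t (_ : t ∈ univ) => hterm s t
  have hexpand : ∑ s, ∑ t, w s * w t * ((a s - a t) * (b s - b t)) =
      2 * ((∑ s, w s) * ∑ s, w s * (a s * b s)) -
        2 * ((∑ s, w s * a s) * ∑ s, w s * b s) := by
    have hexp : ∀ s t, w s * w t * ((a s - a t) * (b s - b t)) =
        w s * (a s * b s) * w t + w s * (w t * (a t * b t)) -
          w s * a s * (w t * b t) - w s * b s * (w t * a t) := fun s t => by ring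
    simp only [hexp, Finset.sum_sub_distrib, Finset.sum_add_distrib, ← Finset.mul_sum,
      ← Finset.sum_mul]
    ring
  linarith

section MarkovOperator

variable {X : Type*}

structure IsMarkovOperator (T : Module.End ℝ (X → ℝ)) : Prop where
  nonneg : ∀ F, 0 ≤ F → 0 ≤ T F
  map_one : T 1 = 1

namespace IsMarkovOperator

variable {T U : Module.End ℝ (X → ℝ)}

theorem one : IsMarkovOperator (1 : Module.End ℝ (X → ℝ)) := ⟨fun _ h => h, rfl⟩

theorem mul (hT : IsMarkovOperator T) (hU : IsMarkovOperator U) : IsMarkovOperator (T * U) :=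
  ⟨fun F hF => hT.nonneg _ (hU.nonneg F hF), by rw [Module.End.mul_apply, hU.map_one, hT.map_one]⟩

theorem map_const (hT : IsMarkovOperator T) (c : ℝ) : T (fun _ => c) = fun _ => c := by
  have : (fun _ => c : X → ℝ) = c • 1 := by ext; simp
  rw [this, map_smul, hT.map_one]

theorem le_apply (hT : IsMarkovOperator T) {F : X → ℝ} {m : ℝ} (hF : ∀ x, m ≤ F x) (x : X) :
    m ≤ T F x := by
  have := hT.nonneg (F - fun _ => m) fun y => sub_nonneg.2 (hF y)
  rw [map_sub, hT.map_const] at this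
  simpa using this x

theorem apply_sub_apply_le [Finite X] (hT : IsMarkovOperator T) {δ : ℝ} (hδ : δ ≤ 1)
    (hmin : ∀ F, 0 ≤ F → ∀ x y, δ * F y ≤ T F x) {F : X → ℝ} {D : ℝ}
    (hF : ∀ x y, F x - F y ≤ D) (x y : X) : T F x - T F y ≤ (1 - δ) * D := by
  have : Nonempty X := ⟨x⟩
  obtain ⟨xmax, hmax⟩ := Finite.exists_max F
  obtain ⟨xmin, hmin'⟩ := Finite.exists_min F
  have hlow : F xmin ≤ T F y := hT.le_apply hmin' y
  have hhigh : δ * (F xmax - F xmin) ≤ F xmax - T F x := by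
    have := hmin ((fun _ => F xmax) - F) (fun z => sub_nonneg.2 (hmax z)) x xmin
    rwa [map_sub, hT.map_const] at this
  nlinarith [hF xmax xmin]

theorem pow_apply_sub_pow_apply_le [Finite X] (hT : IsMarkovOperator T) {δ : ℝ} (hδ1 : δ ≤ 1)
    (hmin : ∀ F, 0 ≤ F → ∀ x y, δ * F y ≤ T F x) {F : X → ℝ} {D : ℝ}
    (hF : ∀ x y, F x - F y ≤ D) (t : ℕ) (x y : X) :
    (T ^ t) F x - (T ^ t) F y ≤ (1 - δ) ^ t * D := by
  induction t generalizing x y with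
  | zero => simpa using hF x y
  | succ t ih =>
    rw [pow_succ', Module.End.mul_apply, pow_succ, mul_comm _ (1 - δ), mul_assoc]
    exact hT.apply_sub_apply_le hδ1 hmin ih x y

end IsMarkovOperator

variable [Fintype X] {P : X → ℝ}

theorem abs_sub_sum_mul_le (hP0 : ∀ x, 0 ≤ P x) (hP1 : ∑ x, P x = 1) {F : X → ℝ} {D : ℝ}
    (hF : ∀ x y, F x - F y ≤ D) (x : X) : |F x - ∑ y, P y * F y| ≤ D := by
  have hbound : ∀ G : X → ℝ, (∀ y, G y ≤ D) → ∑ y, P y * G y ≤ D := fun G hG =>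
    calc ∑ y, P y * G y ≤ ∑ y, P y * D :=
          Finset.sum_le_sum fun y _ => mul_le_mul_of_nonneg_left (hG y) (hP0 y)
      _ = D := by rw [← Finset.sum_mul, hP1, one_mul]
  have hup := hbound (fun y => F y - F x) fun y => hF y x
  have hdown := hbound (fun y => F x - F y) fun y => hF x y
  simp only [mul_sub, Finset.sum_sub_distrib, ← Finset.sum_mul, hP1, one_mul] at hup hdown
  exact abs_le.2 ⟨by linarith, by linarith⟩

theorem sum_mul_sum_sub_le (hP0 : ∀ x, 0 ≤ P x) (hP1 : ∑ x, P x = 1) {F G : X → ℝ} {a b : ℝ}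
    (hF : ∀ x, |F x - ∑ y, P y * F y| ≤ a) (hG : ∀ x, |G x - ∑ y, P y * G y| ≤ b) :
    (∑ x, P x * F x) * (∑ x, P x * G x) - a * b ≤ ∑ x, P x * (F x * G x) := by
  set EF := ∑ y, P y * F y
  set EG := ∑ y, P y * G y
  have hcov : ∑ x, P x * ((F x - EF) * (G x - EG)) = ∑ x, P x * (F x * G x) - EF * EG := by
    have : ∀ x, P x * ((F x - EF) * (G x - EG)) =
        P x * (F x * G x) - EG * (P x * F x) - EF * (P x * G x) + EF * EG * P x :=
      fun x => by ring
    simp only [this, Finset.sum_add_distrib, Finset.sum_sub_distrib, ← Finset.mul_sum, hP1]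
    ring
  have hterm : ∀ x, -(a * b) * P x ≤ P x * ((F x - EF) * (G x - EG)) := fun x => by
    have := abs_mul (F x - EF) (G x - EG) ▸
      mul_le_mul (hF x) (hG x) (abs_nonneg _) ((abs_nonneg _).trans (hF x))
    nlinarith [neg_abs_le ((F x - EF) * (G x - EG)), hP0 x]
  have := Finset.sum_le_sum fun x (_ : x ∈ univ) => hterm x
  rw [← Finset.mul_sum, hP1, hcov] at this
  linarith

variable [Preorder X]

structure IsAttractiveMarkov (P : X → ℝ) (T : Module.End ℝ (X → ℝ)) : Prop
    extends IsMarkovOperator T where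
  sum_mul_apply : ∀ F, ∑ x, P x * T F x = ∑ x, P x * F x
  monotone_apply : ∀ F, Monotone F → Monotone (T F)
  apply_mul_apply_le : ∀ F G, Monotone F → Monotone G → T F * T G ≤ T (F * G)

namespace IsAttractiveMarkov

variable {T U : Module.End ℝ (X → ℝ)}

theorem one : IsAttractiveMarkov P (1 : Module.End ℝ (X → ℝ)) :=
  { IsMarkovOperator.one with
    sum_mul_apply := fun _ => rfl
    monotone_apply := fun _ h => h
    apply_mul_apply_le := fun _ _ _ _ => le_rfl }

theorem mul (hT : IsAttractiveMarkov P T) (hU : IsAttractiveMarkov P U) :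
    IsAttractiveMarkov P (T * U) :=
  { hT.toIsMarkovOperator.mul hU.toIsMarkovOperator with
    sum_mul_apply := fun F => (hT.sum_mul_apply _).trans (hU.sum_mul_apply F)
    monotone_apply := fun F hF => hT.monotone_apply _ (hU.monotone_apply F hF)
    apply_mul_apply_le := fun F G hF hG =>
      (hT.apply_mul_apply_le _ _ (hU.monotone_apply F hF) (hU.monotone_apply G hG)).trans <| by
        have := hT.nonneg _ (sub_nonneg.2 (hU.apply_mul_apply_le F G hF hG))
        rwa [map_sub, sub_nonneg] at this }

theorem pow (hT : IsAttractiveMarkov P T) (t : ℕ) : IsAttractiveMarkov P (T ^ t) := by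
  induction t with
  | zero => exact one
  | succ t ih => rw [pow_succ]; exact ih.mul hT

theorem sum_mul_apply_mul_apply_le (hP0 : ∀ x, 0 ≤ P x) (hT : IsAttractiveMarkov P T)
    {F G : X → ℝ} (hF : Monotone F) (hG : Monotone G) :
    ∑ x, P x * (T F x * T G x) ≤ ∑ x, P x * (F x * G x) :=
  calc ∑ x, P x * (T F x * T G x) ≤ ∑ x, P x * T (F * G) x :=
        Finset.sum_le_sum fun x _ =>
          mul_le_mul_of_nonneg_left (hT.apply_mul_apply_le F G hF hG x) (hP0 x)
    _ = ∑ x, P x * (F x * G x) := hT.sum_mul_apply _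

theorem sum_mul_sum_le (hP0 : ∀ x, 0 ≤ P x) (hP1 : ∑ x, P x = 1) (hT : IsAttractiveMarkov P T)
    {δ : ℝ} (hδ0 : 0 < δ) (hδ1 : δ ≤ 1) (hmin : ∀ F, 0 ≤ F → ∀ x y, δ * F y ≤ T F x)
    {f g : X → ℝ} (hf : Monotone f) (hg : Monotone g) :
    (∑ x, P x * f x) * (∑ x, P x * g x) ≤ ∑ x, P x * (f x * g x) := by
  obtain ⟨Df, hDf⟩ := Finite.exists_le fun p : X × X => f p.1 - f p.2
  obtain ⟨Dg, hDg⟩ := Finite.exists_le fun p : X × X => g p.1 - g p.2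
  have hconc : ∀ {F : X → ℝ} {D : ℝ}, (∀ x y, F x - F y ≤ D) →
      ∀ t x, |(T ^ t) F x - ∑ y, P y * (T ^ t) F y| ≤ (1 - δ) ^ t * D := fun hF t =>
    abs_sub_sum_mul_le hP0 hP1 (hT.pow_apply_sub_pow_apply_le hδ1 hmin hF t)
  have hbound : ∀ t : ℕ, (∑ x, P x * f x) * (∑ x, P x * g x) -
      (1 - δ) ^ t * Df * ((1 - δ) ^ t * Dg) ≤ ∑ x, P x * (f x * g x) := fun t => by
    have := sum_mul_sum_sub_le hP0 hP1 (hconc (fun x y => hDf (x, y)) t)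
      (hconc (fun x y => hDg (x, y)) t)
    rw [(hT.pow t).sum_mul_apply, (hT.pow t).sum_mul_apply] at this
    exact this.trans ((hT.pow t).sum_mul_apply_mul_apply_le hP0 hf hg)
  have hr : Tendsto (fun t : ℕ => (1 - δ) ^ t) atTop (𝓝 0) :=
    tendsto_pow_atTop_nhds_zero_of_lt_one (by linarith) (by linarith)
  have hlim := tendsto_const_nhds (x := (∑ x, P x * f x) * (∑ x, P x * g x)).sub
    ((hr.mul_const Df).mul (hr.mul_const Dg))
  simp only [zero_mul, sub_zero] at hlim
  exact le_of_tendsto' hlim hbound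

end IsAttractiveMarkov

end MarkovOperator

section HeatBath

variable {Λ β : Type*} [DecidableEq Λ] [Fintype β] (P : (Λ → β) → ℝ)

/-- The heat-bath update at site `i`: resample `ξ i` from the conditional law of `P` given the
other coordinates of `ξ`. -/
noncomputable def heatBath (i : Λ) : Module.End ℝ ((Λ → β) → ℝ) where
  toFun F ξ := (∑ s, P (update ξ i s) * F (update ξ i s)) / ∑ s, P (update ξ i s)
  map_add' F G := by
    ext ξ
    simp only [Pi.add_apply, mul_add, Finset.sum_add_distrib, add_div]
  map_smul' c F := by
    ext ξ
    simp only [Pi.smul_apply, smul_eq_mul, RingHom.id_apply, mul_left_comm _ c,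
      ← Finset.mul_sum, mul_div_assoc]

noncomputable def sweep (l : List Λ) : Module.End ℝ ((Λ → β) → ℝ) :=
  (l.map (heatBath P)).prod

def HasMonotoneConditionals [Preorder β] : Prop :=
  ∀ (i : Λ) (ξ ξ' : Λ → β), ξ ≤ ξ' →
    ∀ g : β → ℝ, Monotone g →
      (∑ s, P (update ξ i s) * g s) / (∑ s, P (update ξ i s)) ≤
      (∑ s, P (update ξ' i s) * g s) / (∑ s, P (update ξ' i s))

variable {P}

theorem heatBath_apply (i : Λ) (F : (Λ → β) → ℝ) (ξ : Λ → β) :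
    heatBath P i F ξ = (∑ s, P (update ξ i s) * F (update ξ i s)) / ∑ s, P (update ξ i s) :=
  rfl

theorem sum_update_pos (hP : ∀ ξ, 0 < P ξ) (i : Λ) (ξ : Λ → β) :
    0 < ∑ s, P (update ξ i s) :=
  (hP ξ).trans_le <| by
    simpa using Finset.single_le_sum (fun s _ => (hP (update ξ i s)).le) (mem_univ (ξ i))

theorem isMarkovOperator_heatBath (hP : ∀ ξ, 0 < P ξ) (i : Λ) :
    IsMarkovOperator (heatBath P i) where
  nonneg F hF ξ := div_nonneg
    (Finset.sum_nonneg fun s _ => mul_nonneg (hP _).le (hF _)) (sum_update_pos hP i ξ).le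
  map_one := by
    ext ξ
    simp only [heatBath_apply, Pi.one_apply, mul_one]
    exact div_self (sum_update_pos hP i ξ).ne'

theorem isMarkovOperator_sweep (hP : ∀ ξ, 0 < P ξ) (l : List Λ) :
    IsMarkovOperator (sweep P l) := by
  refine List.prod_induction _ (fun _ _ => IsMarkovOperator.mul) IsMarkovOperator.one ?_
  simp only [List.mem_map]
  rintro _ ⟨i, -, rfl⟩
  exact isMarkovOperator_heatBath hP i

theorem sum_mul_heatBath_apply [Fintype Λ] (hP : ∀ ξ, 0 < P ξ) (i : Λ) (F : (Λ → β) → ℝ) :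
    ∑ ξ, P ξ * heatBath P i F ξ = ∑ ξ, P ξ * F ξ := by
  set Z : (Λ → β) → ℝ := fun ξ => ∑ s, P (update ξ i s)
  have hZ : ∀ ξ t, Z (update ξ i t) = Z ξ := fun ξ t => by simp [Z]
  have hinv : Involutive fun p : (Λ → β) × β => (update p.1 i p.2, p.1 i) := fun p => by simp
  calc ∑ ξ, P ξ * heatBath P i F ξ
      = ∑ p : (Λ → β) × β, P p.1 * P (update p.1 i p.2) * F (update p.1 i p.2) / Z p.1 := by
        simp only [Fintype.sum_prod_type, heatBath_apply, Finset.mul_sum, Finset.sum_div,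
          mul_div_assoc, mul_assoc, Z]
    _ = ∑ p : (Λ → β) × β, P (update p.1 i p.2) * (P p.1 * F p.1 / Z p.1) := by
        refine Fintype.sum_bijective _ hinv.bijective _ _ fun p => ?_
        simp only [update_idem, update_eq_self, hZ]
        ring
    _ = ∑ ξ, P ξ * F ξ := by
        simp only [Fintype.sum_prod_type, ← Finset.sum_mul]
        exact Fintype.sum_congr _ _ fun ξ => mul_div_cancel₀ _ (sum_update_pos hP i ξ).ne'

section Monotone

variable [LinearOrder β]

theorem heatBath_apply_mul_apply_le (hP : ∀ ξ, 0 < P ξ) (i : Λ) {F G : (Λ → β) → ℝ}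
    (hF : Monotone F) (hG : Monotone G) :
    heatBath P i F * heatBath P i G ≤ heatBath P i (F * G) := fun ξ => by
  have hZ := sum_update_pos hP i ξ
  simp only [Pi.mul_apply, heatBath_apply, div_mul_div_comm]
  have hcheb : (∑ s, P (update ξ i s) * F (update ξ i s)) *
      (∑ s, P (update ξ i s) * G (update ξ i s)) ≤
      (∑ s, P (update ξ i s)) * ∑ s, P (update ξ i s) * (F (update ξ i s) * G (update ξ i s)) :=
    sum_mul_sum_le_sum_mul_sum_of_monotone (fun s => (hP _).le)
      (hF.comp (update_mono (f := ξ) (i := i))) (hG.comp (update_mono (f := ξ) (i := i)))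
  rw [div_le_div_iff₀ (mul_pos hZ hZ) hZ]
  nlinarith [mul_le_mul_of_nonneg_right hcheb hZ.le]

theorem HasMonotoneConditionals.monotone_heatBath_apply (hcond : HasMonotoneConditionals P)
    (hP : ∀ ξ, 0 < P ξ) (i : Λ) {F : (Λ → β) → ℝ} (hF : Monotone F) :
    Monotone (heatBath P i F) := fun ξ ξ' h =>
  calc heatBath P i F ξ
      ≤ (∑ s, P (update ξ' i s) * F (update ξ i s)) / ∑ s, P (update ξ' i s) :=
        hcond i ξ ξ' h _ (hF.comp (update_mono (f := ξ) (i := i)))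
    _ ≤ heatBath P i F ξ' := by
        refine div_le_div_of_nonneg_right ?_ (sum_update_pos hP i ξ').le
        exact Finset.sum_le_sum fun s _ =>
          mul_le_mul_of_nonneg_left (hF (update_le_update_iff.2 ⟨le_rfl, fun j _ => h j⟩)) (hP _).le

theorem HasMonotoneConditionals.isAttractiveMarkov_sweep [Fintype Λ]
    (hcond : HasMonotoneConditionals P) (hP : ∀ ξ, 0 < P ξ) (l : List Λ) :
    IsAttractiveMarkov P (sweep P l) := by
  refine List.prod_induction _ (fun _ _ => IsAttractiveMarkov.mul) IsAttractiveMarkov.one ?_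
  simp only [List.mem_map]
  rintro _ ⟨i, -, rfl⟩
  exact { isMarkovOperator_heatBath hP i with
    sum_mul_apply := sum_mul_heatBath_apply hP i
    monotone_apply := fun _ => hcond.monotone_heatBath_apply hP i
    apply_mul_apply_le := fun _ _ => heatBath_apply_mul_apply_le hP i }

end Monotone

theorem exists_heatBath_minorization [Fintype Λ] (hP : ∀ ξ, 0 < P ξ) :
    ∃ c, 0 < c ∧ c ≤ 1 ∧ ∀ i (F : (Λ → β) → ℝ), 0 ≤ F →
      ∀ ξ s, c * F (update ξ i s) ≤ heatBath P i F ξ := by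
  obtain ⟨c, hc0, hc⟩ : ∃ c, 0 < c ∧ ∀ p : Λ × (Λ → β) × β,
      c ≤ P (update p.2.1 p.1 p.2.2) / ∑ s, P (update p.2.1 p.1 s) := by
    rcases isEmpty_or_nonempty (Λ × (Λ → β) × β) with h | h
    · exact ⟨1, one_pos, fun p => h.elim p⟩
    · obtain ⟨p, hp⟩ := Finite.exists_min fun p : Λ × (Λ → β) × β =>
        P (update p.2.1 p.1 p.2.2) / ∑ s, P (update p.2.1 p.1 s)
      exact ⟨_, div_pos (hP _) (sum_update_pos hP _ _), hp⟩
  refine ⟨min c 1, lt_min hc0 one_pos, min_le_right _ _, fun i F hF ξ s => ?_⟩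
  calc min c 1 * F (update ξ i s)
      ≤ P (update ξ i s) / (∑ s, P (update ξ i s)) * F (update ξ i s) :=
        mul_le_mul_of_nonneg_right ((min_le_left _ _).trans (hc (i, ξ, s))) (hF _)
    _ = P (update ξ i s) * F (update ξ i s) / ∑ s, P (update ξ i s) := div_mul_eq_mul_div _ _ _
    _ ≤ heatBath P i F ξ :=
        div_le_div_of_nonneg_right
          (Finset.single_le_sum (fun s _ => mul_nonneg (hP _).le (hF _)) (mem_univ s))
          (sum_update_pos hP i ξ).le

theorem pow_length_mul_le_sweep_apply (hP : ∀ ξ, 0 < P ξ) {c : ℝ} (hc0 : 0 ≤ c)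
    (hc : ∀ i (F : (Λ → β) → ℝ), 0 ≤ F → ∀ ξ s, c * F (update ξ i s) ≤ heatBath P i F ξ)
    (l : List Λ) {F : (Λ → β) → ℝ} (hF : 0 ≤ F) {ξ η : Λ → β} (hξη : ∀ j ∉ l, ξ j = η j) :
    c ^ l.length * F η ≤ sweep P l F ξ := by
  induction l generalizing ξ with
  | nil => simp [sweep, funext fun j => hξη j List.not_mem_nil]
  | cons i l ih =>
    have hagree : ∀ j ∉ l, update ξ i (η i) j = η j := fun j hj => by
      by_cases hji : j = i
      · subst hji; simp
      · rw [update_of_ne hji]; exact hξη j (by simp [hji, hj])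
    have hsweep : 0 ≤ sweep P l F := (isMarkovOperator_sweep hP l).nonneg F hF
    calc c ^ (i :: l).length * F η = c * (c ^ l.length * F η) := by
          rw [List.length_cons, pow_succ', mul_assoc]
      _ ≤ c * sweep P l F (update ξ i (η i)) := mul_le_mul_of_nonneg_left (ih hagree) hc0
      _ ≤ heatBath P i (sweep P l F) ξ := hc i _ hsweep ξ (η i)
      _ = sweep P (i :: l) F ξ := by simp [sweep]

end HeatBath

theorem positive_correlations_of_monotone_conditionals_general
    {Λ : Type*} [Fintype Λ] [DecidableEq Λ]
    (S : Finset ℝ)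
    (P : (Λ → S) → ℝ)
    (hPpos : ∀ ξ, 0 < P ξ)
    (hPsum : ∑ ξ : Λ → S, P ξ = 1)
    (hcond : ∀ (i : Λ) (ξ ξ' : Λ → S), ξ ≤ ξ' →
      ∀ g : S → ℝ, Monotone g →
        (∑ s : S, P (Function.update ξ i s) * g s) /
          (∑ s : S, P (Function.update ξ i s)) ≤
        (∑ s : S, P (Function.update ξ' i s) * g s) /
          (∑ s : S, P (Function.update ξ' i s))) :
    ∀ f g : (Λ → S) → ℝ, Monotone f → Monotone g →
      (∑ ξ : Λ → S, P ξ * f ξ) * (∑ ξ : Λ → S, P ξ * g ξ) ≤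
        ∑ ξ : Λ → S, P ξ * (f ξ * g ξ) := by
  intro f g hf hg
  set l := (univ : Finset Λ).toList
  have hT : IsAttractiveMarkov P (sweep P l) :=
    HasMonotoneConditionals.isAttractiveMarkov_sweep hcond hPpos l
  obtain ⟨c, hc0, hc1, hc⟩ := exists_heatBath_minorization hPpos
  -- a sweep through every site can move any configuration to any other
  have hdoeblin : ∀ F, 0 ≤ F → ∀ ξ η, c ^ l.length * F η ≤ sweep P l F ξ := fun F hF ξ η =>
    pow_length_mul_le_sweep_apply hPpos hc0.le hc l hF fun j hj =>
      absurd (mem_toList.2 (mem_univ j)) hj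
  exact hT.sum_mul_sum_le (fun ξ => (hPpos ξ).le) hPsum (pow_pos hc0 _) (pow_le_one₀ hc0.le hc1)
    hdoeblin hf hg

/-- **FKG-type consequence of Holley's inequality.** If the single-site conditional
distributions of a fully supported probability measure `P` on `S^Λ` are stochastically
increasing in the boundary configuration, then `P` has positive correlations: any two
(automatically bounded) monotone functions are positively correlated. -/
theorem positive_correlations_of_monotone_conditionals
    {Λ : Type*} [Fintype Λ] [DecidableEq Λ] [Nonempty Λ]
    (S : Finset ℝ) (hS : S.Nonempty)
    (P : (Λ → S) → ℝ)
    (hPpos : ∀ ξ, 0 < P ξ)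
    (hPsum : ∑ ξ : Λ → S, P ξ = 1)
    (hcond : ∀ (i : Λ) (ξ ξ' : Λ → S), ξ ≤ ξ' →
      ∀ g : S → ℝ, Monotone g →
        (∑ s : S, P (Function.update ξ i s) * g s) /
          (∑ s : S, P (Function.update ξ i s)) ≤
        (∑ s : S, P (Function.update ξ' i s) * g s) /
          (∑ s : S, P (Function.update ξ' i s))) :
    ∀ f g : (Λ → S) → ℝ, Monotone f → Monotone g →
      (∑ ξ : Λ → S, P ξ * f ξ) * (∑ ξ : Λ → S, P ξ * g ξ) ≤
        ∑ ξ : Λ → S, P ξ * (f ξ * g ξ) :=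
  positive_correlations_of_monotone_conditionals_general S P hPpos hPsum hcond
end

section
/- In the Edwards–Sokal coupling on a finite graph with a distinguished boundary vertex set forced to spin +1, the expected spin at a vertex v under the Ising measure with plus boundary condition equals the probability, under the corresponding wired random-cluster measure, that v is connected to the boundary: ∫ ξ_v dG^+ = φ(v ↔ boundary). -/
open Finset

namespace RandomCluster

variable {V : Type*} [Fintype V] [DecidableEq V]

/-- The graph of open edges of a bond configuration `η` on the edge set `F`. -/
def openGraph (F : Finset (Sym2 V)) (η : F → Bool) : SimpleGraph V :=
  SimpleGraph.fromEdgeSet {e : Sym2 V | ∃ h : e ∈ F, η ⟨e, h⟩ = true}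

/-- The number of connected components of the graph of open edges (isolated
vertices included). -/
noncomputable def numClusters (F : Finset (Sym2 V)) (η : F → Bool) : ℕ :=
  Nat.card (openGraph F η).ConnectedComponent

/-- Number of open edges. -/
def numOpen (F : Finset (Sym2 V)) (η : F → Bool) : ℕ :=
  (Finset.univ.filter fun e : F => η e = true).card

/-- Number of closed edges. -/
def numClosed (F : Finset (Sym2 V)) (η : F → Bool) : ℕ :=
  (Finset.univ.filter fun e : F => η e = false).card

/-- The (unnormalized) `q = 2` random-cluster weight `2^{k(η)} p^{o(η)} (1-p)^{c(η)}`. -/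
noncomputable def rcWeight (F : Finset (Sym2 V)) (p : ℝ) (η : F → Bool) : ℝ :=
  2 ^ numClusters F η * p ^ numOpen F η * (1 - p) ^ numClosed F η

/-- The two endpoints of the edge `e` carry the same spin under `ξ`. -/
def SameSpin (ξ : V → Bool) (e : Sym2 V) : Prop :=
  ∃ a b : V, e = s(a, b) ∧ ξ a = ξ b

open Classical in
/-- The Ising weight with plus boundary condition on `B`:
`exp(-J ⬝ #{disagreeing edges})` if `ξ ≡ +1` on `B`, and `0` otherwise. -/
noncomputable def isingPlusWeight (F : Finset (Sym2 V)) (B : Finset V) (J : ℝ)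
    (ξ : V → Bool) : ℝ :=
  if ∀ b ∈ B, ξ b = true then
    Real.exp (-(J * ((Finset.univ.filter fun e : F => ¬ SameSpin ξ (e : Sym2 V)).card : ℝ)))
  else 0

/-- The number of clusters of the open graph with all of `B` wired into one vertex,
realized by adding all edges between distinct vertices of `B`. -/
noncomputable def numClustersWired (F : Finset (Sym2 V)) (B : Finset V) (η : F → Bool) : ℕ :=
  Nat.card (openGraph F η ⊔
    SimpleGraph.fromEdgeSet {e : Sym2 V | ∃ a ∈ B, ∃ b ∈ B, e = s(a, b)}).ConnectedComponent

/-- The wired random-cluster weight `2^{k'(η)} p^{o(η)} (1-p)^{c(η)}`. -/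
noncomputable def rcWiredWeight (F : Finset (Sym2 V)) (B : Finset V) (p : ℝ)
    (η : F → Bool) : ℝ :=
  2 ^ numClustersWired F B η * p ^ numOpen F η * (1 - p) ^ numClosed F η

lemma sum_pi_bool_single {ι : Type*} [Fintype ι] [DecidableEq ι] (i : ι) (u : Bool → ℝ) :
    ∑ c : ι → Bool, u (c i) = 2 ^ (Fintype.card ι - 1) * (u true + u false) := by
  rw [Fintype.sum_equiv (Equiv.funSplitAt i Bool) _ (fun x => u x.1) (fun f => by
    simp [Equiv.funSplitAt, Equiv.piSplitAt])]
  rw [Fintype.sum_prod_type]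
  simp only [Finset.sum_const, Finset.card_univ, nsmul_eq_mul]
  rw [Fintype.card_fun]
  have hcard : Fintype.card { j : ι // j ≠ i } = Fintype.card ι - 1 := by
    simp [Fintype.card_subtype_compl]
  rw [hcard]
  rw [Fintype.sum_bool, Fintype.card_bool]
  push_cast
  ring

lemma sum_pi_bool_pair {ι : Type*} [Fintype ι] [DecidableEq ι] {i j : ι} (h : j ≠ i)
    (u w : Bool → ℝ) :
    ∑ c : ι → Bool, u (c i) * w (c j) =
      2 ^ (Fintype.card ι - 2) * (u true + u false) * (w true + w false) := by
  rw [Fintype.sum_equiv (Equiv.funSplitAt i Bool) _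
      (fun x => u x.1 * w (x.2 ⟨j, h⟩)) (fun f => by
    simp [Equiv.funSplitAt, Equiv.piSplitAt])]
  rw [Fintype.sum_prod_type]
  have : ∀ b : Bool, ∑ rest : { k : ι // k ≠ i } → Bool, u b * w (rest ⟨j, h⟩)
      = u b * (2 ^ (Fintype.card ι - 2) * (w true + w false)) := by
    intro b
    rw [← Finset.mul_sum, sum_pi_bool_single (ι := { k : ι // k ≠ i }) ⟨j, h⟩ w]
    have hcard : Fintype.card { k : ι // k ≠ i } = Fintype.card ι - 1 := by
      simp [Fintype.card_subtype_compl]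
    rw [hcard]
    have : Fintype.card ι - 1 - 1 = Fintype.card ι - 2 := by omega
    rw [this]
  rw [Fintype.sum_congr _ _ this, Fintype.sum_bool]
  ring


def wireGraph (B : Finset V) : SimpleGraph V :=
  SimpleGraph.fromEdgeSet {e : Sym2 V | ∃ a ∈ B, ∃ b ∈ B, e = s(a, b)}

lemma wireGraph_adj {B : Finset V} {a b : V} :
    (wireGraph B).Adj a b ↔ a ∈ B ∧ b ∈ B ∧ a ≠ b := by
  rw [wireGraph, SimpleGraph.fromEdgeSet_adj]
  constructor
  · rintro ⟨⟨x, hx, y, hy, hxy⟩, hne⟩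
    rw [Sym2.eq_iff] at hxy
    rcases hxy with ⟨rfl, rfl⟩ | ⟨rfl, rfl⟩ <;> exact ⟨by assumption, by assumption, hne⟩
  · rintro ⟨ha, hb, hne⟩
    exact ⟨⟨a, ha, b, hb, rfl⟩, hne⟩

lemma openGraph_adj {F : Finset (Sym2 V)} {η : F → Bool} {a b : V} :
    (openGraph F η).Adj a b ↔ (∃ h : s(a, b) ∈ F, η ⟨s(a, b), h⟩ = true) ∧ a ≠ b := by
  rw [openGraph, SimpleGraph.fromEdgeSet_adj]; rfl

lemma sameSpin_iff {ξ : V → Bool} {a b : V} : SameSpin ξ s(a, b) ↔ ξ a = ξ b := by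
  constructor
  · rintro ⟨x, y, hxy, hs⟩
    rw [Sym2.eq_iff] at hxy
    rcases hxy with ⟨rfl, rfl⟩ | ⟨rfl, rfl⟩
    · exact hs
    · exact hs.symm
  · intro hs; exact ⟨a, b, rfl, hs⟩

lemma walk_to_open {F : Finset (Sym2 V)} {η : F → Bool} {B : Finset V} :
    ∀ {x y : V}, (openGraph F η ⊔ wireGraph B).Walk x y →
      (openGraph F η).Reachable x y ∨ ∃ b ∈ B, (openGraph F η).Reachable x b := by
  intro x y w
  induction w with
  | nil => exact Or.inl (SimpleGraph.Reachable.refl _)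
  | @cons x z y h q ih =>
    rcases (SimpleGraph.sup_adj _ _ _ _).mp h with ho | hw
    · rcases ih with hr | ⟨b, hb, hr⟩
      · exact Or.inl (ho.reachable.trans hr)
      · exact Or.inr ⟨b, hb, ho.reachable.trans hr⟩
    · exact Or.inr ⟨x, (wireGraph_adj.mp hw).1, SimpleGraph.Reachable.refl _⟩

lemma reach_wired_iff {F : Finset (Sym2 V)} {η : F → Bool} {B : Finset V} {b₀ : V}
    (hb₀ : b₀ ∈ B) {v : V} :
    (openGraph F η ⊔ wireGraph B).Reachable v b₀ ↔
      ∃ b ∈ B, (openGraph F η).Reachable v b := by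
  constructor
  · rintro ⟨w⟩
    rcases walk_to_open w with hr | h
    · exact ⟨b₀, hb₀, hr⟩
    · exact h
  · rintro ⟨b, hb, hr⟩
    refine (hr.mono le_sup_left).trans ?_
    rcases eq_or_ne b b₀ with rfl | hne
    · exact SimpleGraph.Reachable.refl _
    · refine SimpleGraph.Adj.reachable ?_
      rw [SimpleGraph.sup_adj]
      exact Or.inr (wireGraph_adj.mpr ⟨hb, hb₀, hne⟩)


lemma walk_const {G : SimpleGraph V} {ξ : V → Bool}
    (hadj : ∀ a b : V, G.Adj a b → ξ a = ξ b) :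
    ∀ {x y : V}, G.Walk x y → ξ x = ξ y := by
  intro x y w
  induction w with
  | nil => rfl
  | @cons x z y h _ ih => exact (hadj x z h).trans ih

lemma comp_eq_of_mem {F : Finset (Sym2 V)} {η : F → Bool} {B : Finset V} {b b₀ : V}
    (hb : b ∈ B) (hb₀ : b₀ ∈ B) :
    (openGraph F η ⊔ wireGraph B).connectedComponentMk b
      = (openGraph F η ⊔ wireGraph B).connectedComponentMk b₀ := by
  rcases eq_or_ne b b₀ with rfl | hne
  · rfl
  · exact SimpleGraph.ConnectedComponent.connectedComponentMk_eq_of_adj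
      ((SimpleGraph.sup_adj _ _ _ _).mpr (Or.inr (wireGraph_adj.mpr ⟨hb, hb₀, hne⟩)))

open Classical in
open Classical in
lemma transfer (F : Finset (Sym2 V)) (B : Finset V) (hB : B.Nonempty) (η : F → Bool) (v : V)
    [Fintype (openGraph F η ⊔ wireGraph B).ConnectedComponent] (g : Bool → ℝ) :
    ∑ ξ : V → Bool, (if ∀ b ∈ B, ξ b = true then (1:ℝ) else 0) *
        (if ∀ e : F, η e = true → SameSpin ξ (e : Sym2 V) then (1:ℝ) else 0) * g (ξ v) =
    ∑ c : (openGraph F η ⊔ wireGraph B).ConnectedComponent → Bool,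
      (if c ((openGraph F η ⊔ wireGraph B).connectedComponentMk hB.choose) = true
          then (1:ℝ) else 0)
        * g (c ((openGraph F η ⊔ wireGraph B).connectedComponentMk v)) := by
  set G' := openGraph F η ⊔ wireGraph B with hG'
  set q : V → G'.ConnectedComponent := (openGraph F η ⊔ wireGraph B).connectedComponentMk with hq
  have hq_surj : Function.Surjective q := fun c => c.exists_rep
  set Φ : (G'.ConnectedComponent → Bool) → (V → Bool) := fun c => fun x => c (q x) with hΦ
  have hΦ_inj : Function.Injective Φ := hq_surj.injective_comp_right
  set f : (V → Bool) → ℝ := fun ξ =>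
    (if ∀ b ∈ B, ξ b = true then (1:ℝ) else 0) *
      (if ∀ e : F, η e = true → SameSpin ξ (e : Sym2 V) then (1:ℝ) else 0) * g (ξ v) with hf
  have hA : ∀ c : (openGraph F η ⊔ wireGraph B).ConnectedComponent → Bool,
      f (Φ c) = (if c (q hB.choose) = true then (1:ℝ) else 0) * g (c (q v)) := by
    intro c
    have h1 : (∀ b ∈ B, Φ c b = true) ↔ c (q hB.choose) = true := by
      constructor
      · intro h; exact h hB.choose hB.choose_spec
      · intro h b hb
        show c (q b) = true
        rw [show q b = q hB.choose from comp_eq_of_mem hb hB.choose_spec]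
        exact h
    have h2 : ∀ e : F, η e = true → SameSpin (Φ c) (e : Sym2 V) := by
      rintro ⟨e, he⟩ hηe
      revert he hηe
      induction e using Sym2.ind with
      | _ a b =>
        intro he hηe
        refine sameSpin_iff.mpr ?_
        show c (q a) = c (q b)
        rcases eq_or_ne a b with rfl | hne
        · rfl
        · have hadj : G'.Adj a b := by
            rw [hG', SimpleGraph.sup_adj]
            exact Or.inl (openGraph_adj.mpr ⟨⟨he, hηe⟩, hne⟩)
          exact congrArg c (SimpleGraph.ConnectedComponent.connectedComponentMk_eq_of_adj hadj)
    have hfc : f (Φ c) = ((if ∀ b ∈ B, Φ c b = true then (1:ℝ) else 0) *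
        (if ∀ e : F, η e = true → SameSpin (Φ c) (e : Sym2 V) then (1:ℝ) else 0)) *
        g (Φ c v) := rfl
    rw [hfc, if_pos h2, mul_one, if_congr h1 rfl rfl]
  have hB' : ∀ ξ : V → Bool, ξ ∉ Finset.univ.image Φ → f ξ = 0 := by
    intro ξ hξ
    by_cases h1 : ∀ b ∈ B, ξ b = true
    · by_cases h2 : ∀ e : F, η e = true → SameSpin ξ (e : Sym2 V)
      · exfalso
        apply hξ
        have hadj : ∀ a b : V, G'.Adj a b → ξ a = ξ b := by
          intro a b hab
          rcases (SimpleGraph.sup_adj _ _ _ _).mp hab with ho | hw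
          · obtain ⟨⟨he, hη⟩, -⟩ := openGraph_adj.mp ho
            exact sameSpin_iff.mp (h2 ⟨s(a, b), he⟩ hη)
          · obtain ⟨ha, hb, -⟩ := wireGraph_adj.mp hw
            rw [h1 a ha, h1 b hb]
        refine Finset.mem_image.mpr ⟨SimpleGraph.ConnectedComponent.lift ξ
          (fun a b p _ => walk_const hadj p), Finset.mem_univ _, ?_⟩
        funext x
        rfl
      · show ((if ∀ b ∈ B, ξ b = true then (1:ℝ) else 0) *
            (if ∀ e : F, η e = true → SameSpin ξ (e : Sym2 V) then (1:ℝ) else 0)) * g (ξ v) = 0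
        rw [if_neg h2, mul_zero, zero_mul]
    · show ((if ∀ b ∈ B, ξ b = true then (1:ℝ) else 0) *
          (if ∀ e : F, η e = true → SameSpin ξ (e : Sym2 V) then (1:ℝ) else 0)) * g (ξ v) = 0
      rw [if_neg h1, zero_mul, zero_mul]
  calc ∑ ξ : V → Bool, f ξ = ∑ ξ ∈ Finset.univ.image Φ, f ξ :=
        (Finset.sum_subset (Finset.subset_univ _) (fun ξ _ h => hB' ξ h)).symm
    _ = ∑ c : (openGraph F η ⊔ wireGraph B).ConnectedComponent → Bool, f (Φ c) :=
        Finset.sum_image (fun a _ b _ h => hΦ_inj h)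
    _ = _ := by
        refine Finset.sum_congr ?_ fun c _ => hA c
        congr!


lemma numClustersWired_eq (F : Finset (Sym2 V)) (B : Finset V) (η : F → Bool) :
    numClustersWired F B η
      = Nat.card (openGraph F η ⊔ wireGraph B).ConnectedComponent := rfl

lemma numClustersWired_pos (F : Finset (Sym2 V)) (B : Finset V) (η : F → Bool) (v : V) :
    1 ≤ numClustersWired F B η := by
  rw [numClustersWired_eq]
  have : Nonempty (openGraph F η ⊔ wireGraph B).ConnectedComponent :=
    ⟨(openGraph F η ⊔ wireGraph B).connectedComponentMk v⟩
  exact Nat.card_pos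

open Classical in
lemma key_den (F : Finset (Sym2 V)) (B : Finset V) (hB : B.Nonempty) (η : F → Bool) (v : V) :
    ∑ ξ : V → Bool, (if ∀ b ∈ B, ξ b = true then (1:ℝ) else 0) *
        (if ∀ e : F, η e = true → SameSpin ξ (e : Sym2 V) then (1:ℝ) else 0) * (1:ℝ)
    = 2 ^ (numClustersWired F B η - 1) := by
  haveI : Fintype (openGraph F η ⊔ wireGraph B).ConnectedComponent := Fintype.ofFinite _
  rw [show (∑ ξ : V → Bool, (if ∀ b ∈ B, ξ b = true then (1:ℝ) else 0) *
        (if ∀ e : F, η e = true → SameSpin ξ (e : Sym2 V) then (1:ℝ) else 0) * (1:ℝ)) =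
      ∑ ξ : V → Bool, (if ∀ b ∈ B, ξ b = true then (1:ℝ) else 0) *
        (if ∀ e : F, η e = true → SameSpin ξ (e : Sym2 V) then (1:ℝ) else 0) *
        (fun _ : Bool => (1:ℝ)) (ξ v) from rfl]
  rw [transfer F B hB η v (fun _ => (1:ℝ))]
  show (∑ c : (openGraph F η ⊔ wireGraph B).ConnectedComponent → Bool,
      (fun b => (if b = true then (1:ℝ) else 0) * 1)
        (c ((openGraph F η ⊔ wireGraph B).connectedComponentMk hB.choose))) = _
  rw [sum_pi_bool_single ((openGraph F η ⊔ wireGraph B).connectedComponentMk hB.choose)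
    (fun b => (if b = true then (1:ℝ) else 0) * 1)]
  rw [numClustersWired_eq, Nat.card_eq_fintype_card]
  norm_num

open Classical in
open Classical in
lemma key_num (F : Finset (Sym2 V)) (B : Finset V) (hB : B.Nonempty) (η : F → Bool) (v : V) :
    ∑ ξ : V → Bool, (if ∀ b ∈ B, ξ b = true then (1:ℝ) else 0) *
        (if ∀ e : F, η e = true → SameSpin ξ (e : Sym2 V) then (1:ℝ) else 0) *
        (if ξ v then (1:ℝ) else -1)
    = 2 ^ (numClustersWired F B η - 1) *
        (if ∃ b ∈ B, (openGraph F η).Reachable v b then (1:ℝ) else 0) := by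
  haveI : Fintype (openGraph F η ⊔ wireGraph B).ConnectedComponent := Fintype.ofFinite _
  rw [show (∑ ξ : V → Bool, (if ∀ b ∈ B, ξ b = true then (1:ℝ) else 0) *
        (if ∀ e : F, η e = true → SameSpin ξ (e : Sym2 V) then (1:ℝ) else 0) *
        (if ξ v then (1:ℝ) else -1)) =
      ∑ ξ : V → Bool, (if ∀ b ∈ B, ξ b = true then (1:ℝ) else 0) *
        (if ∀ e : F, η e = true → SameSpin ξ (e : Sym2 V) then (1:ℝ) else 0) *
        (fun b : Bool => if b = true then (1:ℝ) else -1) (ξ v) from rfl]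
  rw [transfer F B hB η v (fun b => if b = true then (1:ℝ) else -1)]
  by_cases hconn : ∃ b ∈ B, (openGraph F η).Reachable v b
  · have hd : (openGraph F η ⊔ wireGraph B).connectedComponentMk v = (openGraph F η ⊔ wireGraph B).connectedComponentMk hB.choose :=
      SimpleGraph.ConnectedComponent.eq.mpr ((reach_wired_iff hB.choose_spec).mpr hconn)
    rw [hd]
    show (∑ c : (openGraph F η ⊔ wireGraph B).ConnectedComponent → Bool,
        (fun b => (if b = true then (1:ℝ) else 0) * (if b = true then (1:ℝ) else -1))
          (c ((openGraph F η ⊔ wireGraph B).connectedComponentMk hB.choose))) = _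
    rw [sum_pi_bool_single ((openGraph F η ⊔ wireGraph B).connectedComponentMk hB.choose)
      (fun b => (if b = true then (1:ℝ) else 0) * (if b = true then (1:ℝ) else -1)), if_pos hconn]
    rw [numClustersWired_eq, Nat.card_eq_fintype_card]
    norm_num
  · have hd : (openGraph F η ⊔ wireGraph B).connectedComponentMk v ≠ (openGraph F η ⊔ wireGraph B).connectedComponentMk hB.choose := by
      intro h
      exact hconn ((reach_wired_iff hB.choose_spec).mp (SimpleGraph.ConnectedComponent.eq.mp h))
    show (∑ c : (openGraph F η ⊔ wireGraph B).ConnectedComponent → Bool,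
        (fun b => if b = true then (1:ℝ) else 0) (c ((openGraph F η ⊔ wireGraph B).connectedComponentMk hB.choose)) *
        (fun b => if b = true then (1:ℝ) else -1) (c ((openGraph F η ⊔ wireGraph B).connectedComponentMk v))) = _
    rw [sum_pi_bool_pair hd (fun b => if b = true then (1:ℝ) else 0)
      (fun b => if b = true then (1:ℝ) else -1), if_neg hconn]
    norm_num


open Classical in
lemma prod_w_eta (F : Finset (Sym2 V)) (p : ℝ) (ξ : V → Bool) (η : F → Bool) :
    (∏ e : F, (if η e = true then (if SameSpin ξ (e : Sym2 V) then p else 0) else (1 - p)))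
    = (if ∀ e : F, η e = true → SameSpin ξ (e : Sym2 V) then (1:ℝ) else 0) *
        (p ^ numOpen F η * (1 - p) ^ numClosed F η) := by
  rw [Finset.prod_ite]
  have hclosed : (∏ _e ∈ Finset.univ.filter (fun e : F => ¬ η e = true), (1 - p))
      = (1 - p) ^ numClosed F η := by
    have hfe : Finset.univ.filter (fun e : F => ¬ η e = true)
        = Finset.univ.filter (fun e : F => η e = false) :=
      Finset.filter_congr (fun e _ => by simp [Bool.not_eq_true])
    rw [hfe, Finset.prod_const, numClosed]
  by_cases hall : ∀ e : F, η e = true → SameSpin ξ (e : Sym2 V)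
  · rw [if_pos hall]
    have hopen : (∏ e ∈ Finset.univ.filter (fun e : F => η e = true),
        (if SameSpin ξ (e : Sym2 V) then p else 0)) = p ^ numOpen F η := by
      rw [Finset.prod_congr rfl (fun e he => if_pos (hall e (by
        simpa using (Finset.mem_filter.mp he).2)))]
      rw [Finset.prod_const, numOpen]
    rw [hopen, hclosed, one_mul]
  · rw [if_neg hall]
    push_neg at hall
    obtain ⟨e, he, hns⟩ := hall
    rw [zero_mul]
    apply mul_eq_zero_of_left
    exact Finset.prod_eq_zero (Finset.mem_filter.mpr ⟨Finset.mem_univ e, he⟩) (if_neg hns)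

open Classical in
lemma ising_decomp (F : Finset (Sym2 V)) (B : Finset V) (J p : ℝ)
    (hp : p = 1 - Real.exp (-J)) (ξ : V → Bool) :
    isingPlusWeight F B J ξ = (if ∀ b ∈ B, ξ b = true then (1:ℝ) else 0) *
      ∑ η : F → Bool, ∏ e : F,
        (if η e = true then (if SameSpin ξ (e : Sym2 V) then p else 0) else (1 - p)) := by
  rw [isingPlusWeight]
  by_cases h : ∀ b ∈ B, ξ b = true
  · rw [if_pos h, if_pos h, one_mul]
    have h1p : 1 - p = Real.exp (-J) := by rw [hp]; ring
    have step1 : (∑ η : F → Bool, ∏ e : F,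
        (if η e = true then (if SameSpin ξ (e : Sym2 V) then p else 0) else (1 - p)))
        = ∏ e : F, ((if SameSpin ξ (e : Sym2 V) then p else 0) + (1 - p)) := by
      have hswap := Finset.prod_univ_sum (fun _ : F => (Finset.univ : Finset Bool))
        (fun e b => if b = true then (if SameSpin ξ (e : Sym2 V) then p else 0) else (1 - p))
      rw [Fintype.piFinset_univ] at hswap
      rw [← hswap]
      refine Finset.prod_congr rfl fun e _ => ?_
      rw [Fintype.sum_bool]
      norm_num
    rw [step1]
    have step2 : (∏ e : F, ((if SameSpin ξ (e : Sym2 V) then p else 0) + (1 - p)))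
        = ∏ e : F, (if SameSpin ξ (e : Sym2 V) then (1:ℝ) else (1 - p)) := by
      refine Finset.prod_congr rfl fun e _ => ?_
      by_cases hs : SameSpin ξ (e : Sym2 V)
      · rw [if_pos hs, if_pos hs]; ring
      · rw [if_neg hs, if_neg hs]; ring
    rw [step2, Finset.prod_ite, Finset.prod_const_one, one_mul, Finset.prod_const, h1p,
      ← Real.exp_nat_mul]
    congr 1
    ring
  · rw [if_neg h, if_neg h, zero_mul]

open Classical in
lemma sum_ising_g (F : Finset (Sym2 V)) (B : Finset V) (J p : ℝ)
    (hp : p = 1 - Real.exp (-J)) (v : V) (g : Bool → ℝ) :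
    ∑ ξ : V → Bool, isingPlusWeight F B J ξ * g (ξ v)
    = ∑ η : F → Bool, (p ^ numOpen F η * (1 - p) ^ numClosed F η) *
        ∑ ξ : V → Bool, (if ∀ b ∈ B, ξ b = true then (1:ℝ) else 0) *
          (if ∀ e : F, η e = true → SameSpin ξ (e : Sym2 V) then (1:ℝ) else 0) * g (ξ v) := by
  have step1 : ∀ ξ : V → Bool, isingPlusWeight F B J ξ * g (ξ v)
      = ∑ η : F → Bool, (if ∀ b ∈ B, ξ b = true then (1:ℝ) else 0) *
          ((p ^ numOpen F η * (1 - p) ^ numClosed F η) *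
          (if ∀ e : F, η e = true → SameSpin ξ (e : Sym2 V) then (1:ℝ) else 0)) * g (ξ v) := by
    intro ξ
    rw [ising_decomp F B J p hp ξ, Finset.mul_sum, Finset.sum_mul]
    refine Finset.sum_congr rfl fun η _ => ?_
    rw [prod_w_eta]
    ring
  rw [Finset.sum_congr rfl fun ξ _ => step1 ξ, Finset.sum_comm]
  refine Finset.sum_congr rfl fun η _ => ?_
  rw [Finset.mul_sum]
  refine Finset.sum_congr rfl fun ξ _ => ?_
  ring

open Classical in
/-- **Magnetization equals connectivity to the boundary.** For the Ising model on a
finite graph with plus boundary condition on a nonempty set `B` and `p = 1 - e^{-J}`,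
the expected spin at a vertex `v` equals the probability, under the wired random-cluster
measure, that `v` is connected to `B` by open edges. -/
theorem ising_magnetization_eq_wired_connectivity
    (F : Finset (Sym2 V)) (hF : ∀ e ∈ F, ¬ e.IsDiag)
    (B : Finset V) (hB : B.Nonempty)
    (J : ℝ) (hJ : 0 < J) (p : ℝ) (hp : p = 1 - Real.exp (-J)) (v : V) :
    (∑ ξ : V → Bool, isingPlusWeight F B J ξ * (if ξ v then (1 : ℝ) else -1)) /
        (∑ ξ : V → Bool, isingPlusWeight F B J ξ) =
      (∑ η : F → Bool, rcWiredWeight F B p η *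
          (if ∃ b ∈ B, (openGraph F η).Reachable v b then (1 : ℝ) else 0)) /
        (∑ η : F → Bool, rcWiredWeight F B p η) := by
  classical
  have hg1 : (∑ ξ : V → Bool, isingPlusWeight F B J ξ)
      = ∑ ξ : V → Bool, isingPlusWeight F B J ξ * (fun _ : Bool => (1:ℝ)) (ξ v) := by
    refine Finset.sum_congr rfl fun ξ _ => ?_
    rw [mul_one]
  have hden : (∑ ξ : V → Bool, isingPlusWeight F B J ξ)
      = (1/2) * ∑ η : F → Bool, rcWiredWeight F B p η := by
    rw [hg1, sum_ising_g F B J p hp v (fun _ => (1:ℝ)), Finset.mul_sum]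
    refine Finset.sum_congr rfl fun η _ => ?_
    rw [key_den F B hB η v, rcWiredWeight]
    have h2 : (2:ℝ) ^ numClustersWired F B η
        = 2 * 2 ^ (numClustersWired F B η - 1) := by
      rw [← pow_succ']
      congr 1
      have := numClustersWired_pos F B η v
      omega
    rw [h2]
    ring
  have hnum : (∑ ξ : V → Bool, isingPlusWeight F B J ξ * (if ξ v then (1 : ℝ) else -1))
      = (1/2) * ∑ η : F → Bool, rcWiredWeight F B p η *
          (if ∃ b ∈ B, (openGraph F η).Reachable v b then (1 : ℝ) else 0) := by
    rw [sum_ising_g F B J p hp v (fun b => if b = true then (1:ℝ) else -1), Finset.mul_sum]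
    refine Finset.sum_congr rfl fun η _ => ?_
    rw [key_num F B hB η v, rcWiredWeight]
    have h2 : (2:ℝ) ^ numClustersWired F B η
        = 2 * 2 ^ (numClustersWired F B η - 1) := by
      rw [← pow_succ']
      congr 1
      have := numClustersWired_pos F B η v
      omega
    rw [h2]
    ring
  rw [hnum, hden, mul_div_mul_left _ _ (by norm_num : (1/2 : ℝ) ≠ 0)]


end RandomCluster
end
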